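/- arXiv:2604.07426 — 2 statements merged into one kernel-verified Lean document; each statement's English description precedes it below -/
import Mathlib

section
/- Let M = ⟨S, A, P, R, γ⟩ and M̂ = ⟨S, A, P̂, R, γ⟩ be two finite MDPs sharing the same state space, action space, reward function bounded by Rmax, and discount γ ∈ [0,1). Then for every deterministic policy π : S → A and every initial state s0 ∈ S, |V^π_{M̂}(s0) − V^π_M(s0)| ≤ (Rmax/(1−γ)²) · ∑_{(s,a)∈S×A} ρ^π_{M,s0}(s,a) · IPM(P(·|s,a), P̂(·|s,a)). -/
/-!
Let `d_t`, `d̂_t` be the state distributions at time `t` under `P` and `P̂`. Since rewards are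
bounded by `Rmax`, the value gap is at most `Rmax ∑ γ^t ‖d̂_t - d_t‖₁`. Writing
`d̂_{t+1} - d_{t+1} = (d̂_t - d_t) P̂ + d_t (P̂ - P)` and using that `P̂` is an `ℓ¹` contraction,
the drift grows by at most `e_t = E_{s ~ d_t} ‖P(·|s,π s) - P̂(·|s,π s)‖₁` per step; discounting
this recursion gives `(1 - γ) ∑ γ^t ‖d̂_t - d_t‖₁ ≤ γ ∑ γ^t e_t`. Finally the unit-ball IPM is
the `ℓ¹` distance, so `∑ γ^t e_t` is `1/(1 - γ)` times the occupancy-weighted IPM error.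
-/


open Finset

/-- `p` is a probability mass function on the finite type `S`. -/
def IsPMF {S : Type*} [Fintype S] (p : S → ℝ) : Prop :=
  (∀ s, 0 ≤ p s) ∧ ∑ s, p s = 1

/-- Integral probability metric over the unit-sup-norm function class. -/
noncomputable def IPM {S : Type*} [Fintype S] (p q : S → ℝ) : ℝ :=
  sSup {x : ℝ | ∃ f : S → ℝ, (∀ s, |f s| ≤ 1) ∧
    x = |∑ s, f s * p s - ∑ s, f s * q s|}

/-- The distribution of the state after `t` steps starting from `s0`,
following the deterministic policy `π` under the kernel `P`. -/
noncomputable def stateDist {S A : Type*} [Fintype S] [DecidableEq S]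
    (P : S → A → S → ℝ) (π : S → A) (s0 : S) : ℕ → S → ℝ
  | 0 => fun s => if s = s0 then 1 else 0
  | (t + 1) => fun s' => ∑ s, stateDist P π s0 t s * P s (π s) s'

/-- The value function `V^π_M(s0) = ∑_{t=0}^∞ γ^t E[R(s_t, a_t)]`. -/
noncomputable def valueFn {S A : Type*} [Fintype S] [DecidableEq S]
    (P : S → A → S → ℝ) (R : S → A → ℝ) (γ : ℝ) (π : S → A) (s0 : S) : ℝ :=
  ∑' t : ℕ, γ ^ t * ∑ s, stateDist P π s0 t s * R s (π s)

/-- The discounted state-action occupancy measure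
`ρ^π_{M,s0}(s,a) = (1-γ) ∑_t γ^t Pr(s_t = s, a_t = a)`. -/
noncomputable def occupancy {S A : Type*} [Fintype S] [DecidableEq S] [DecidableEq A]
    (P : S → A → S → ℝ) (γ : ℝ) (π : S → A) (s0 : S) (s : S) (a : A) : ℝ :=
  (1 - γ) * ∑' t : ℕ, γ ^ t * (if π s = a then stateDist P π s0 t s else 0)

section ProbabilityVectors

variable {S : Type*} [Fintype S]

lemma IsPMF.le_one {p : S → ℝ} (hp : IsPMF p) (s : S) : p s ≤ 1 :=
  hp.2 ▸ single_le_sum (fun s _ => hp.1 s) (mem_univ s)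

lemma IsPMF.abs_sum_mul_le {p f : S → ℝ} {C : ℝ} (hp : IsPMF p) (hf : ∀ s, |f s| ≤ C) :
    |∑ s, p s * f s| ≤ C :=
  calc |∑ s, p s * f s| ≤ ∑ s, p s * C := (abs_sum_le_sum_abs _ _).trans <|
        sum_le_sum fun s _ => by
          rw [abs_mul, abs_of_nonneg (hp.1 s)]
          exact mul_le_mul_of_nonneg_left (hf s) (hp.1 s)
    _ = C := by rw [← sum_mul, hp.2, one_mul]

lemma IsPMF.sum_abs_sub_le_two {p q : S → ℝ} (hp : IsPMF p) (hq : IsPMF q) :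
    ∑ s, |p s - q s| ≤ 2 :=
  calc ∑ s, |p s - q s| ≤ ∑ s, (p s + q s) := sum_le_sum fun s _ =>
        (abs_sub _ _).trans_eq (by rw [abs_of_nonneg (hp.1 s), abs_of_nonneg (hq.1 s)])
    _ = 2 := by rw [sum_add_distrib, hp.2, hq.2]; norm_num

lemma abs_sum_mul_sub_sum_mul_le {p q f : S → ℝ} {C : ℝ} (hf : ∀ s, |f s| ≤ C) :
    |∑ s, p s * f s - ∑ s, q s * f s| ≤ C * ∑ s, |p s - q s| := by
  rw [← sum_sub_distrib, mul_sum]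
  refine (abs_sum_le_sum_abs _ _).trans (sum_le_sum fun s _ => ?_)
  rw [← sub_mul, abs_mul, mul_comm]
  exact mul_le_mul_of_nonneg_right (hf s) (abs_nonneg _)

/-- The supremum is attained at `f = sign (p - q)`. -/
theorem IPM_eq_sum_abs_sub (p q : S → ℝ) : IPM p q = ∑ s, |p s - q s| := by
  have hbound : ∑ s, |p s - q s| ∈ upperBounds {x : ℝ | ∃ f : S → ℝ, (∀ s, |f s| ≤ 1) ∧
      x = |∑ s, f s * p s - ∑ s, f s * q s|} := by
    rintro x ⟨f, hf, rfl⟩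
    simpa only [mul_comm (f _), one_mul] using abs_sum_mul_sub_sum_mul_le (p := p) (q := q) hf
  refine le_antisymm (csSup_le ⟨_, 0, by simp, rfl⟩ hbound)
    (le_csSup ⟨_, hbound⟩ ⟨fun s => SignType.sign (p s - q s), fun s => ?_, ?_⟩)
  · rcases lt_trichotomy (p s - q s) 0 with h | h | h <;> simp [h]
  · simp only [← sum_sub_distrib, ← mul_sub, sign_mul_self]
    exact (abs_of_nonneg (sum_nonneg fun s _ => abs_nonneg _)).symm

lemma sum_abs_sum_mul_le {K : S → S → ℝ} (hK : ∀ s, IsPMF (K s)) (x : S → ℝ) :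
    ∑ s', |∑ s, x s * K s s'| ≤ ∑ s, |x s| :=
  calc ∑ s', |∑ s, x s * K s s'| ≤ ∑ s', ∑ s, |x s| * K s s' := sum_le_sum fun s' _ =>
        (abs_sum_le_sum_abs _ _).trans_eq <| sum_congr rfl fun s _ => by
          rw [abs_mul, abs_of_nonneg ((hK s).1 s')]
    _ = ∑ s, |x s| := by
        rw [sum_comm]
        simp only [← mul_sum, (hK _).2, mul_one]

/-- Error propagation through one transition: `μK - νL = (μ - ν)K + ν(K - L)`. -/
lemma sum_abs_sum_mul_sub_sum_mul_le {μ ν : S → ℝ} {K L : S → S → ℝ}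
    (hK : ∀ s, IsPMF (K s)) (hν : ∀ s, 0 ≤ ν s) :
    ∑ s', |∑ s, μ s * K s s' - ∑ s, ν s * L s s'| ≤
      ∑ s, |μ s - ν s| + ∑ s, ν s * ∑ s', |L s s' - K s s'| := by
  have hsplit : ∀ s', ∑ s, μ s * K s s' - ∑ s, ν s * L s s' =
      ∑ s, (μ s - ν s) * K s s' - ∑ s, ν s * (L s s' - K s s') := fun s' => by
    simp only [sub_mul, mul_sub, sum_sub_distrib]
    ring
  calc ∑ s', |∑ s, μ s * K s s' - ∑ s, ν s * L s s'|
      ≤ ∑ s', (|∑ s, (μ s - ν s) * K s s'| + ∑ s, ν s * |L s s' - K s s'|) :=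
        sum_le_sum fun s' _ => by
          rw [hsplit]
          refine (abs_sub _ _).trans (add_le_add le_rfl ((abs_sum_le_sum_abs _ _).trans_eq ?_))
          simp only [abs_mul, abs_of_nonneg (hν _)]
    _ ≤ ∑ s, |μ s - ν s| + ∑ s, ν s * ∑ s', |L s s' - K s s'| := by
        rw [sum_add_distrib, sum_comm (s := univ) (t := univ)]
        simp only [← mul_sum]
        exact add_le_add (sum_abs_sum_mul_le hK _) le_rfl

end ProbabilityVectors

section DiscountedSums

variable {γ : ℝ}

lemma summable_pow_mul_of_abs_le (hγ0 : 0 ≤ γ) (hγ1 : γ < 1) {f : ℕ → ℝ} {C : ℝ}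
    (hf : ∀ t, |f t| ≤ C) : Summable fun t => γ ^ t * f t :=
  ((summable_geometric_of_lt_one hγ0 hγ1).mul_right C).of_norm_bounded fun t => by
    rw [Real.norm_eq_abs, abs_mul, abs_pow, abs_of_nonneg hγ0]
    exact mul_le_mul_of_nonneg_left (hf t) (pow_nonneg hγ0 t)

/-- Discounted form of the discrete Grönwall bound `δ t ≤ ∑_{k < t} e k`. -/
lemma one_sub_mul_tsum_pow_mul_le (hγ : 0 ≤ γ) {δ e : ℕ → ℝ} (h0 : δ 0 = 0)
    (hstep : ∀ t, δ (t + 1) ≤ δ t + e t) (hδ : Summable fun t => γ ^ t * δ t)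
    (he : Summable fun t => γ ^ t * e t) :
    (1 - γ) * ∑' t, γ ^ t * δ t ≤ γ * ∑' t, γ ^ t * e t := by
  have hshift : ∑' t, γ ^ t * δ t = ∑' t, γ ^ (t + 1) * δ (t + 1) := by
    rw [hδ.tsum_eq_zero_add, h0, mul_zero, zero_add]
  have hle : ∑' t, γ ^ (t + 1) * δ (t + 1) ≤ γ * ∑' t, (γ ^ t * δ t + γ ^ t * e t) := by
    rw [← tsum_mul_left]
    refine ((summable_nat_add_iff 1).2 hδ).tsum_le_tsum (fun t => ?_) ((hδ.add he).mul_left γ)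
    calc γ ^ (t + 1) * δ (t + 1) ≤ γ ^ (t + 1) * (δ t + e t) :=
          mul_le_mul_of_nonneg_left (hstep t) (pow_nonneg hγ _)
      _ = γ * (γ ^ t * δ t + γ ^ t * e t) := by ring
  rw [hδ.tsum_add he] at hle
  linarith

end DiscountedSums

section MDP

variable {S A : Type*} [Fintype S] [DecidableEq S] {P : S → A → S → ℝ} (π : S → A) (s0 : S)

lemma isPMF_stateDist (hP : ∀ s a, IsPMF (P s a)) (t : ℕ) : IsPMF (stateDist P π s0 t) := by
  induction t with
  | zero => exact ⟨fun s => by unfold stateDist; split_ifs <;> norm_num, by simp [stateDist]⟩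
  | succ t ih =>
    refine ⟨fun s' => sum_nonneg fun s _ => mul_nonneg (ih.1 s) ((hP s (π s)).1 s'), ?_⟩
    change ∑ s', ∑ s, stateDist P π s0 t s * P s (π s) s' = 1
    rw [sum_comm]
    simp only [← mul_sum, (hP _ _).2, mul_one, ih.2]

lemma summable_pow_mul_dist_stateDist {Phat : S → A → S → ℝ} {γ : ℝ}
    (hP : ∀ s a, IsPMF (P s a)) (hPhat : ∀ s a, IsPMF (Phat s a)) (hγ0 : 0 ≤ γ) (hγ1 : γ < 1) :
    Summable fun t => γ ^ t * ∑ s, |stateDist Phat π s0 t s - stateDist P π s0 t s| :=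
  summable_pow_mul_of_abs_le hγ0 hγ1 fun t => by
    rw [abs_of_nonneg (sum_nonneg fun s _ => abs_nonneg _)]
    exact (isPMF_stateDist π s0 hPhat t).sum_abs_sub_le_two (isPMF_stateDist π s0 hP t)

lemma abs_valueFn_sub_valueFn_le {Phat : S → A → S → ℝ} {R : S → A → ℝ} {Rmax γ : ℝ}
    (hP : ∀ s a, IsPMF (P s a)) (hPhat : ∀ s a, IsPMF (Phat s a))
    (hR : ∀ s a, |R s a| ≤ Rmax) (hγ0 : 0 ≤ γ) (hγ1 : γ < 1) :
    |valueFn Phat R γ π s0 - valueFn P R γ π s0| ≤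
      Rmax * ∑' t, γ ^ t * ∑ s, |stateDist Phat π s0 t s - stateDist P π s0 t s| := by
  have hreward : ∀ {Q : S → A → S → ℝ}, (∀ s a, IsPMF (Q s a)) →
      Summable fun t => γ ^ t * ∑ s, stateDist Q π s0 t s * R s (π s) := fun hQ =>
    summable_pow_mul_of_abs_le hγ0 hγ1 fun t =>
      (isPMF_stateDist π s0 hQ t).abs_sum_mul_le fun s => hR s (π s)
  rw [valueFn, valueFn, ← (hreward hPhat).tsum_sub (hreward hP), ← tsum_mul_left,
    ← Real.norm_eq_abs]
  refine tsum_of_norm_bounded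
    ((summable_pow_mul_dist_stateDist π s0 hP hPhat hγ0 hγ1).mul_left Rmax).hasSum fun t => ?_
  rw [Real.norm_eq_abs, ← mul_sub, abs_mul, abs_pow, abs_of_nonneg hγ0, mul_left_comm]
  exact mul_le_mul_of_nonneg_left (abs_sum_mul_sub_sum_mul_le fun s => hR s (π s))
    (pow_nonneg hγ0 t)

lemma sum_occupancy_mul [Fintype A] [DecidableEq A] (hP : ∀ s a, IsPMF (P s a)) {γ : ℝ}
    (hγ0 : 0 ≤ γ) (hγ1 : γ < 1) (g : S → A → ℝ) :
    ∑ s, ∑ a, occupancy P γ π s0 s a * g s a =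
      (1 - γ) * ∑' t, γ ^ t * ∑ s, stateDist P π s0 t s * g s (π s) := by
  have hsingle : ∀ s, ∑ a, occupancy P γ π s0 s a * g s a =
      (1 - γ) * ∑' t, γ ^ t * (stateDist P π s0 t s * g s (π s)) := fun s => by
    rw [sum_eq_single (π s) (fun a _ ha => by simp [occupancy, Ne.symm ha]) (by simp),
      occupancy, mul_assoc, ← tsum_mul_right]
    simp only [if_true, mul_assoc]
  have hsummable : ∀ s, Summable fun t => γ ^ t * (stateDist P π s0 t s * g s (π s)) :=
    fun s => summable_pow_mul_of_abs_le hγ0 hγ1 fun t => by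
      have hd := isPMF_stateDist π s0 hP t
      rw [abs_mul, abs_of_nonneg (hd.1 s)]
      exact mul_le_of_le_one_left (abs_nonneg _) (hd.le_one s)
  rw [sum_congr rfl fun s _ => hsingle s, ← mul_sum,
    ← Summable.tsum_finsetSum fun s _ => hsummable s]
  simp only [mul_sum]

lemma one_sub_mul_tsum_dist_stateDist_le {Phat : S → A → S → ℝ} {γ : ℝ}
    (hP : ∀ s a, IsPMF (P s a)) (hPhat : ∀ s a, IsPMF (Phat s a)) (hγ0 : 0 ≤ γ) (hγ1 : γ < 1) :
    (1 - γ) * ∑' t, γ ^ t * ∑ s, |stateDist Phat π s0 t s - stateDist P π s0 t s| ≤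
      γ * ∑' t, γ ^ t *
        ∑ s, stateDist P π s0 t s * ∑ s', |P s (π s) s' - Phat s (π s) s'| := by
  have hd := isPMF_stateDist π s0 hP
  have hkernel : ∀ s, |(∑ s', |P s (π s) s' - Phat s (π s) s'|)| ≤ 2 := fun s => by
    rw [abs_of_nonneg (sum_nonneg fun s _ => abs_nonneg _)]
    exact (hP s (π s)).sum_abs_sub_le_two (hPhat s (π s))
  exact one_sub_mul_tsum_pow_mul_le hγ0 (by simp [stateDist])
    (fun t => sum_abs_sum_mul_sub_sum_mul_le (fun s => hPhat s (π s)) (hd t).1)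
    (summable_pow_mul_dist_stateDist π s0 hP hPhat hγ0 hγ1)
    (summable_pow_mul_of_abs_le hγ0 hγ1 fun t => (hd t).abs_sum_mul_le hkernel)

end MDP

/-- **Occupancy-weighted value gap.** For any deterministic policy `π` and
initial state `s0`, the value gap between the two MDPs is bounded by
`(Rmax/(1-γ)²)` times the occupancy-weighted expected IPM transition error. -/
theorem value_gap_occupancy
    {S A : Type*} [Fintype S] [DecidableEq S] [Nonempty S]
    [Fintype A] [DecidableEq A] [Nonempty A]
    (P Phat : S → A → S → ℝ) (R : S → A → ℝ) (Rmax γ : ℝ)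
    (hP : ∀ s a, IsPMF (P s a)) (hPhat : ∀ s a, IsPMF (Phat s a))
    (hR : ∀ s a, |R s a| ≤ Rmax)
    (hγ0 : 0 ≤ γ) (hγ1 : γ < 1)
    (π : S → A) (s0 : S) :
    |valueFn Phat R γ π s0 - valueFn P R γ π s0| ≤
      (Rmax / (1 - γ) ^ 2) *
        ∑ s, ∑ a, occupancy P γ π s0 s a * IPM (P s a) (Phat s a) := by
  have hRmax : 0 ≤ Rmax :=
    (abs_nonneg _).trans (hR (Classical.arbitrary S) (Classical.arbitrary A))
  set D := ∑' t, γ ^ t * ∑ s, |stateDist Phat π s0 t s - stateDist P π s0 t s|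
  set E := ∑' t, γ ^ t *
    ∑ s, stateDist P π s0 t s * ∑ s', |P s (π s) s' - Phat s (π s) s'|
  have hE : 0 ≤ E := tsum_nonneg fun t => mul_nonneg (pow_nonneg hγ0 t) <|
    sum_nonneg fun s _ => mul_nonneg ((isPMF_stateDist π s0 hP t).1 s) <|
      sum_nonneg fun s _ => abs_nonneg _
  have hD : D ≤ E / (1 - γ) := by
    rw [le_div_iff₀ (by linarith)]
    nlinarith [one_sub_mul_tsum_dist_stateDist_le π s0 hP hPhat hγ0 hγ1]
  rw [sum_occupancy_mul π s0 hP hγ0 hγ1 fun s a => IPM (P s a) (Phat s a)]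
  simp only [IPM_eq_sum_abs_sub]
  calc |valueFn Phat R γ π s0 - valueFn P R γ π s0| ≤ Rmax * D :=
        abs_valueFn_sub_valueFn_le π s0 hP hPhat hR hγ0 hγ1
    _ ≤ Rmax * (E / (1 - γ)) := mul_le_mul_of_nonneg_left hD hRmax
    _ = Rmax / (1 - γ) ^ 2 * ((1 - γ) * E) := by
        field_simp [(by linarith : (1 - γ) ≠ 0)]
end

section
/- (Compounding of per-step model error over imagination rollouts.) Let S be a nonempty finite set, let P and P̂ be two transition kernels assigning to each state-action pair (s,a) ∈ S × A a probability mass function on S, let π : S → A be a deterministic policy, and suppose IPM(P(·|s,a), P̂(·|s,a)) ≤ ε for all (s,a). For ℓ ≥ 0 and initial state s0, let μ_ℓ and μ̂_ℓ denote the distributions of the state after ℓ steps starting from s0, following π under P and P̂ respectively. Then IPM(μ_ℓ, μ̂_ℓ) ≤ ℓ · ε for all ℓ ≥ 0. -/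
open Finset

/-! Each rollout step adds at most `ε` to the drift. A test function `f` with `|f| ≤ 1` pulled
back through the true kernel is again bounded by `1`, so `μK f - νL f = (μ - ν)(K f) + ν (K f - L f)`
splits into the previous drift, tested against `K f`, plus the one-step kernel error averaged
over `ν`. -/

section IPM

variable {S : Type*} [Fintype S]

lemma IPM_bddAbove (p q : S → ℝ) :
    BddAbove {x : ℝ | ∃ f : S → ℝ, (∀ s, |f s| ≤ 1) ∧
      x = |∑ s, f s * p s - ∑ s, f s * q s|} := by
  refine ⟨∑ s, |p s| + ∑ s, |q s|, ?_⟩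
  rintro _ ⟨f, hf, rfl⟩
  have bound : ∀ r : S → ℝ, |∑ s, f s * r s| ≤ ∑ s, |r s| := fun r =>
    (abs_sum_le_sum_abs _ _).trans <| sum_le_sum fun s _ => by
      rw [abs_mul]
      exact mul_le_of_le_one_left (abs_nonneg _) (hf s)
  exact (abs_sub _ _).trans (add_le_add (bound p) (bound q))

lemma abs_sub_le_IPM (p q : S → ℝ) {f : S → ℝ} (hf : ∀ s, |f s| ≤ 1) :
    |∑ s, f s * p s - ∑ s, f s * q s| ≤ IPM p q :=
  le_csSup (IPM_bddAbove p q) ⟨f, hf, rfl⟩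

lemma IPM_le_of_forall {p q : S → ℝ} {c : ℝ}
    (h : ∀ f : S → ℝ, (∀ s, |f s| ≤ 1) → |∑ s, f s * p s - ∑ s, f s * q s| ≤ c) :
    IPM p q ≤ c :=
  csSup_le ⟨_, 0, fun s => by simp, rfl⟩ fun _ ⟨f, hf, hx⟩ => hx ▸ h f hf

lemma IPM_self (p : S → ℝ) : IPM p p = 0 :=
  le_antisymm (IPM_le_of_forall fun f _ => by simp)
    (by simpa using abs_sub_le_IPM p p (f := 0) (by simp))

lemma abs_sum_mul_le_of_isPMF {p g : S → ℝ} {c : ℝ} (hp : IsPMF p) (hg : ∀ s, |g s| ≤ c) :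
    |∑ s, g s * p s| ≤ c :=
  calc |∑ s, g s * p s| ≤ ∑ s, |g s| * p s := by
        refine (abs_sum_le_sum_abs _ _).trans_eq (sum_congr rfl fun s _ => ?_)
        rw [abs_mul, abs_of_nonneg (hp.1 s)]
    _ ≤ ∑ s, c * p s := sum_le_sum fun s _ => mul_le_mul_of_nonneg_right (hg s) (hp.1 s)
    _ = c := by rw [← mul_sum, hp.2, mul_one]

lemma isPMF_sum_mul_kernel {μ : S → ℝ} {K : S → S → ℝ} (hμ : IsPMF μ) (hK : ∀ s, IsPMF (K s)) :
    IsPMF fun s' => ∑ s, μ s * K s s' := by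
  refine ⟨fun s' => sum_nonneg fun s _ => mul_nonneg (hμ.1 s) ((hK s).1 s'), ?_⟩
  rw [sum_comm]
  simp only [← mul_sum, (hK _).2, mul_one, hμ.2]

lemma sum_mul_sum_mul_kernel (f μ : S → ℝ) (K : S → S → ℝ) :
    ∑ s', f s' * ∑ s, μ s * K s s' = ∑ s, (∑ s', f s' * K s s') * μ s := by
  simp only [mul_sum, sum_mul]
  rw [sum_comm]
  exact sum_congr rfl fun _ _ => sum_congr rfl fun _ _ => by ring

lemma IPM_sum_mul_kernel_le {μ ν : S → ℝ} {K L : S → S → ℝ} {ε : ℝ}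
    (hK : ∀ s, IsPMF (K s)) (hν : IsPMF ν) (hKL : ∀ s, IPM (K s) (L s) ≤ ε) :
    IPM (fun s' => ∑ s, μ s * K s s') (fun s' => ∑ s, ν s * L s s') ≤ IPM μ ν + ε := by
  refine IPM_le_of_forall fun f hf => ?_
  set g : S → ℝ := fun s => ∑ s', f s' * K s s'
  set gL : S → ℝ := fun s => ∑ s', f s' * L s s'
  have hg : ∀ s, |g s| ≤ 1 := fun s => abs_sum_mul_le_of_isPMF (hK s) hf
  have hgL : ∀ s, |g s - gL s| ≤ ε := fun s => (abs_sub_le_IPM _ _ hf).trans (hKL s)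
  have split : ∑ s, g s * μ s - ∑ s, gL s * ν s
      = (∑ s, g s * μ s - ∑ s, g s * ν s) + ∑ s, (g s - gL s) * ν s := by
    simp only [sub_mul, sum_sub_distrib]
    ring
  rw [sum_mul_sum_mul_kernel, sum_mul_sum_mul_kernel, split]
  exact (abs_add_le _ _).trans
    (add_le_add (abs_sub_le_IPM μ ν hg) (abs_sum_mul_le_of_isPMF hν hgL))

end IPM

lemma stateDist_isPMF {S A : Type*} [Fintype S] [DecidableEq S] {P : S → A → S → ℝ}
    (hP : ∀ s a, IsPMF (P s a)) (π : S → A) (s0 : S) (ℓ : ℕ) :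
    IsPMF (stateDist P π s0 ℓ) := by
  induction ℓ with
  | zero => exact ⟨fun s => by unfold stateDist; split <;> norm_num, by simp [stateDist]⟩
  | succ t ih => exact isPMF_sum_mul_kernel ih fun s => hP s (π s)

theorem rollout_drift_compounds_general
    {S A : Type*} [Fintype S] [DecidableEq S]
    (P Phat : S → A → S → ℝ) (ε : ℝ)
    (hP : ∀ s a, IsPMF (P s a)) (hPhat : ∀ s a, IsPMF (Phat s a))
    (π : S → A)
    (hIPM : ∀ s a, IPM (P s a) (Phat s a) ≤ ε)
    (s0 : S) (ℓ : ℕ) :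
    IPM (stateDist P π s0 ℓ) (stateDist Phat π s0 ℓ) ≤ (ℓ : ℝ) * ε := by
  induction ℓ with
  | zero => simp [stateDist, IPM_self]
  | succ t ih =>
    calc IPM (stateDist P π s0 (t + 1)) (stateDist Phat π s0 (t + 1))
        ≤ IPM (stateDist P π s0 t) (stateDist Phat π s0 t) + ε :=
          IPM_sum_mul_kernel_le (fun s => hP s (π s)) (stateDist_isPMF hPhat π s0 t)
            fun s => hIPM s (π s)
      _ ≤ t * ε + ε := by gcongr
      _ = (t + 1 : ℕ) * ε := by push_cast; ring

/-- **Compounding of per-step model error over imagination rollouts.**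
If the two kernels are pointwise within IPM distance `ε`, then the `ℓ`-step
state distributions under the two kernels are within IPM distance `ℓ · ε`. -/
theorem rollout_drift_compounds
    {S A : Type*} [Fintype S] [DecidableEq S] [Nonempty S]
    (P Phat : S → A → S → ℝ) (ε : ℝ)
    (hP : ∀ s a, IsPMF (P s a)) (hPhat : ∀ s a, IsPMF (Phat s a))
    (π : S → A)
    (hIPM : ∀ s a, IPM (P s a) (Phat s a) ≤ ε)
    (s0 : S) (ℓ : ℕ) :
    IPM (stateDist P π s0 ℓ) (stateDist Phat π s0 ℓ) ≤ (ℓ : ℝ) * ε :=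
  rollout_drift_compounds_general P Phat ε hP hPhat π hIPM s0 ℓ
end
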